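/- arXiv:math/9908123 — 7 statements merged into one kernel-verified Lean document; each statement's English description precedes it below -/
import Mathlib

section
/- The rational function H_4(q) = q^4(1+2q+4q^2+6q^3+7q^4+6q^5+4q^6+2q^7+q^8)/((1-q)^2(1-q^2)^2(1-q^3)^2(1-q^4)) satisfies H_4(1/q) = -H_4(q). -/
set_option maxHeartbeats 1000000

lemma staircase_den_facts (r : ℚ) (h1 : r ≠ 1) (hm1 : r ≠ -1) :
    1 - r ≠ 0 ∧ 1 - r^2 ≠ 0 ∧ 1 - r^3 ≠ 0 ∧ 1 - r^4 ≠ 0 := by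
  have h1' : 1 - r ≠ 0 := fun h => h1 (by linarith [sub_eq_zero.mp h])
  have hm1' : 1 + r ≠ 0 := fun h => hm1 (by linarith)
  have h2 : 1 - r^2 ≠ 0 := by
    intro h
    have : (1 - r) * (1 + r) = 0 := by linear_combination h
    rcases mul_eq_zero.mp this with h | h
    · exact h1' h
    · exact hm1' h
  have h3 : 1 - r^3 ≠ 0 := by
    intro h
    have : (1 - r) * (1 + r + r^2) = 0 := by linear_combination h
    rcases mul_eq_zero.mp this with h | h
    · exact h1' h
    · nlinarith [sq_nonneg (r + 1), sq_nonneg (r - 1), sq_nonneg r]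
  have h4 : 1 - r^4 ≠ 0 := by
    intro h
    have : (1 - r^2) * (1 + r^2) = 0 := by linear_combination h
    rcases mul_eq_zero.mp this with h | h
    · exact h2 h
    · nlinarith [sq_nonneg r]
  exact ⟨h1', h2, h3, h4⟩

/-- The area generating function for staircase polygons of width 4,
`H₄(q) = q⁴(1+2q+4q²+6q³+7q⁴+6q⁵+4q⁶+2q⁷+q⁸)/((1-q)²(1-q²)²(1-q³)²(1-q⁴))`,
satisfies `H₄(1/q) = -H₄(q)`. -/
theorem staircase_width_four_self_reciprocal
    (H : ℚ → ℚ)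
    (hH : ∀ q : ℚ, H q =
      q^4 * (1 + 2*q + 4*q^2 + 6*q^3 + 7*q^4 + 6*q^5 + 4*q^6 + 2*q^7 + q^8) /
        ((1 - q)^2 * (1 - q^2)^2 * (1 - q^3)^2 * (1 - q^4))) :
    ∀ q : ℚ, q ≠ 0 → q ≠ 1 → q ≠ -1 → H q⁻¹ = - H q := by
  intro q h0 h1 hm1
  obtain ⟨a1, a2, a3, a4⟩ := staircase_den_facts q h1 hm1
  have hi0 : q⁻¹ ≠ 0 := inv_ne_zero h0
  have hi1 : q⁻¹ ≠ 1 := by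
    intro h; exact h1 (by rw [← inv_inv q, h, inv_one])
  have him1 : q⁻¹ ≠ -1 := by
    intro h
    apply hm1
    rw [← inv_inv q, h]
    norm_num
  obtain ⟨b1, b2, b3, b4⟩ := staircase_den_facts q⁻¹ hi1 him1
  have hD : (1 - q)^2 * (1 - q^2)^2 * (1 - q^3)^2 * (1 - q^4) ≠ 0 :=
    mul_ne_zero (mul_ne_zero (mul_ne_zero (pow_ne_zero _ a1) (pow_ne_zero _ a2))
      (pow_ne_zero _ a3)) a4
  have hD' : (1 - q⁻¹)^2 * (1 - q⁻¹^2)^2 * (1 - q⁻¹^3)^2 * (1 - q⁻¹^4) ≠ 0 :=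
    mul_ne_zero (mul_ne_zero (mul_ne_zero (pow_ne_zero _ b1) (pow_ne_zero _ b2))
      (pow_ne_zero _ b3)) b4
  rw [hH, hH, ← neg_div, div_eq_div_iff hD' hD]
  field_simp
  ring
end

section
/- The rational function H_3(y,q) = yq^3 · (y^6q^8+4y^5q^7+2y^5q^6+y^4q^6−y^4q^4−4y^3q^5−6y^3q^4−4y^3q^3−y^2q^4+y^2q^2+2yq^2+4yq+1) / ((1−yq)^4(1−yq^2)^2(1−yq^3)) satisfies H_3(1/y,1/q) = −(1/(y q^3)) H_3(y,q). -/
set_option maxHeartbeats 2000000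

/-- The half-vertical-perimeter and area generating function for column-convex
polygons of width 3,
`H₃(y,q) = yq³·N(y,q)/((1-yq)⁴(1-yq²)²(1-yq³))` with
`N(y,q) = y⁶q⁸+4y⁵q⁷+2y⁵q⁶+y⁴q⁶−y⁴q⁴−4y³q⁵−6y³q⁴−4y³q³−y²q⁴+y²q²+2yq²+4yq+1`,
satisfies `H₃(1/y,1/q) = −(1/(yq³)) H₃(y,q)`. -/
theorem column_convex_width_three_self_reciprocal
    (H : ℚ → ℚ → ℚ)
    (hH : ∀ y q : ℚ, H y q =
      y * q^3 *
        (y^6*q^8 + 4*y^5*q^7 + 2*y^5*q^6 + y^4*q^6 - y^4*q^4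
          - 4*y^3*q^5 - 6*y^3*q^4 - 4*y^3*q^3 - y^2*q^4 + y^2*q^2
          + 2*y*q^2 + 4*y*q + 1) /
        ((1 - y*q)^4 * (1 - y*q^2)^2 * (1 - y*q^3))) :
    ∀ y q : ℚ, y ≠ 0 → q ≠ 0 → y*q ≠ 1 → y*q^2 ≠ 1 → y*q^3 ≠ 1 →
      H y⁻¹ q⁻¹ = - (1 / (y * q^3)) * H y q := by
  intro y q hy hq h1 h2 h3
  rw [hH, hH]
  have d1 : (1 : ℚ) - y*q ≠ 0 := sub_ne_zero.mpr (fun h => h1 h.symm)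
  have d2 : (1 : ℚ) - y*q^2 ≠ 0 := sub_ne_zero.mpr (fun h => h2 h.symm)
  have d3 : (1 : ℚ) - y*q^3 ≠ 0 := sub_ne_zero.mpr (fun h => h3 h.symm)
  have e1 : (1 : ℚ) - y⁻¹*q⁻¹ ≠ 0 := by
    have : (1 : ℚ) - y⁻¹*q⁻¹ = -(1 - y*q) / (y*q) := by field_simp; ring
    rw [this]
    exact div_ne_zero (neg_ne_zero.mpr d1) (mul_ne_zero hy hq)
  have e2 : (1 : ℚ) - y⁻¹*(q⁻¹)^2 ≠ 0 := by
    have : (1 : ℚ) - y⁻¹*(q⁻¹)^2 = -(1 - y*q^2) / (y*q^2) := by field_simp; ring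
    rw [this]
    exact div_ne_zero (neg_ne_zero.mpr d2) (mul_ne_zero hy (pow_ne_zero 2 hq))
  have e3 : (1 : ℚ) - y⁻¹*(q⁻¹)^3 ≠ 0 := by
    have : (1 : ℚ) - y⁻¹*(q⁻¹)^3 = -(1 - y*q^3) / (y*q^3) := by field_simp; ring
    rw [this]
    exact div_ne_zero (neg_ne_zero.mpr d3) (mul_ne_zero hy (pow_ne_zero 3 hq))
  have hBi : (1 - y⁻¹*q⁻¹)^4 * (1 - y⁻¹*(q⁻¹)^2)^2 * (1 - y⁻¹*(q⁻¹)^3) ≠ 0 :=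
    mul_ne_zero (mul_ne_zero (pow_ne_zero 4 e1) (pow_ne_zero 2 e2)) e3
  rw [div_eq_iff hBi]
  field_simp
  ring
end

section
/- The function G(x,y) = xy/√(Δ(x,y)), with Δ(x,y) = 1−2x−2y−2xy+x^2+y^2, satisfies the inversion relation G(x,y) + y^2 G(x/y, 1/y) = 0. -/
/-- Substitution `y ↦ 1/y` on rational functions of `y`. -/
noncomputable def invSubst : RatFunc ℚ → RatFunc ℚ :=
  RatFunc.eval (algebraMap ℚ (RatFunc ℚ)) (RatFunc.X)⁻¹

/-- `Δ(x,y) = 1−2x−2y−2xy+x²+y²`, as a power series in `x` with coefficients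
rational functions of `y`. -/
noncomputable def DeltaSeries : PowerSeries (RatFunc ℚ) :=
  PowerSeries.C ((1 - RatFunc.X)^2) +
    PowerSeries.C (-2 - 2*RatFunc.X) * PowerSeries.X +
    PowerSeries.X^2

lemma transcendental_ratFuncX : Transcendental ℚ (RatFunc.X : RatFunc ℚ) := by
  have h : (RatFunc.X : RatFunc ℚ) = algebraMap (Polynomial ℚ) (RatFunc ℚ) Polynomial.X :=
    (RatFunc.algebraMap_X).symm
  rw [h, transcendental_algebraMap_iff (RatFunc.algebraMap_injective ℚ)]
  exact Polynomial.transcendental_X ℚ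

lemma transcendental_ratFuncX_inv : Transcendental ℚ ((RatFunc.X : RatFunc ℚ)⁻¹) :=
  fun h => transcendental_ratFuncX (IsAlgebraic.inv_iff.mp h)

lemma aeval_inv_ne_zero {p : Polynomial ℚ} (hp : p ≠ 0) :
    Polynomial.eval₂ (algebraMap ℚ (RatFunc ℚ)) (RatFunc.X)⁻¹ p ≠ 0 := by
  have h : Polynomial.aeval ((RatFunc.X : RatFunc ℚ)⁻¹) p ≠ 0 := by
    intro h
    exact transcendental_ratFuncX_inv ⟨p, hp, h⟩
  simpa [Polynomial.aeval_def] using h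

lemma denom_eval_ne (q : RatFunc ℚ) :
    Polynomial.eval₂ (algebraMap ℚ (RatFunc ℚ)) (RatFunc.X)⁻¹ q.denom ≠ 0 :=
  aeval_inv_ne_zero (RatFunc.denom_ne_zero q)

/-- `invSubst` as a ring homomorphism. -/
noncomputable def invHom : RatFunc ℚ →+* RatFunc ℚ where
  toFun := invSubst
  map_one' := show RatFunc.eval (algebraMap ℚ (RatFunc ℚ)) (RatFunc.X)⁻¹ 1 = 1 from
    RatFunc.eval_one _ _
  map_mul' x y := show RatFunc.eval (algebraMap ℚ (RatFunc ℚ)) (RatFunc.X)⁻¹ (x * y) =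
      RatFunc.eval _ _ x * RatFunc.eval _ _ y from
    RatFunc.eval_mul _ _ (denom_eval_ne x) (denom_eval_ne y)
  map_zero' := show RatFunc.eval (algebraMap ℚ (RatFunc ℚ)) (RatFunc.X)⁻¹ 0 = 0 from
    RatFunc.eval_zero _ _
  map_add' x y := show RatFunc.eval (algebraMap ℚ (RatFunc ℚ)) (RatFunc.X)⁻¹ (x + y) =
      RatFunc.eval _ _ x + RatFunc.eval _ _ y from
    RatFunc.eval_add _ _ (denom_eval_ne x) (denom_eval_ne y)

lemma invHom_apply : ⇑invHom = invSubst := rfl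

lemma invHom_X : invHom RatFunc.X = (RatFunc.X)⁻¹ :=
  show RatFunc.eval (algebraMap ℚ (RatFunc ℚ)) (RatFunc.X)⁻¹ RatFunc.X = _ from
    RatFunc.eval_X _ _

/-- rescale fixes constants. -/
lemma rescale_C' (a r : RatFunc ℚ) :
    PowerSeries.rescale a (PowerSeries.C r) = PowerSeries.C r := by
  ext n
  rw [PowerSeries.coeff_rescale]
  simp only [PowerSeries.coeff_C]
  split_ifs with h
  · simp [h]
  · simp

/-- The coefficientwise substitution `y ↦ 1/y` combined with `x ↦ x/y`,
as a ring homomorphism on power series. -/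
noncomputable def Phi : PowerSeries (RatFunc ℚ) →+* PowerSeries (RatFunc ℚ) :=
  (PowerSeries.rescale ((RatFunc.X : RatFunc ℚ)⁻¹)).comp (PowerSeries.map invHom)

lemma coeff_Phi (f : PowerSeries (RatFunc ℚ)) (n : ℕ) :
    PowerSeries.coeff n (Phi f) =
      ((RatFunc.X : RatFunc ℚ)⁻¹) ^ n * invSubst (PowerSeries.coeff n f) := by
  simp [Phi, PowerSeries.coeff_rescale, PowerSeries.coeff_map, invHom_apply]

lemma Phi_C (c : RatFunc ℚ) :
    Phi (PowerSeries.C c) = PowerSeries.C (invHom c) := by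
  simp only [Phi, RingHom.coe_comp, Function.comp_apply, PowerSeries.map_C, rescale_C']

lemma Phi_X :
    Phi PowerSeries.X = PowerSeries.C ((RatFunc.X : RatFunc ℚ)⁻¹) *
      PowerSeries.X := by
  simp only [Phi, RingHom.coe_comp, Function.comp_apply, PowerSeries.map_X,
    PowerSeries.rescale_X]

lemma one_sub_X_ne : (1 - RatFunc.X : RatFunc ℚ) ≠ 0 := by
  have h : ((1 : Polynomial ℚ) - Polynomial.X) ≠ 0 := by
    intro h
    have h1 := congrArg (fun p => Polynomial.coeff p 1) h
    simp [Polynomial.coeff_one] at h1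
  simpa [map_sub, RatFunc.algebraMap_X] using RatFunc.algebraMap_ne_zero h

lemma X_ne_one : (RatFunc.X : RatFunc ℚ) ≠ 1 := by
  intro h
  exact one_sub_X_ne (by rw [h]; ring)

/-- The directed convex polygon generating function `G(x,y) = xy/√Δ(x,y)`,
where `√Δ` is the square root with constant term `1−y`, satisfies the
inversion relation `G(x,y) + y² G(x/y,1/y) = 0`, as a formal power series in
`x` with coefficients rational in `y` (the substitution being performed
coefficientwise: the coefficient of `xᵐ` in `y² G(x/y,1/y)` is
`y²·H_m(1/y)·y^{−m}`). -/
theorem directed_convex_inversion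
    (S : PowerSeries (RatFunc ℚ))
    (hS2 : S ^ 2 = DeltaSeries)
    (hS0 : PowerSeries.constantCoeff S = 1 - RatFunc.X)
    (G : PowerSeries (RatFunc ℚ))
    (hG : G = PowerSeries.C RatFunc.X * PowerSeries.X * S⁻¹) :
    G + PowerSeries.mk (fun m =>
        RatFunc.X ^ 2 * invSubst (PowerSeries.coeff m G) *
          (RatFunc.X⁻¹) ^ m) = 0 := by
  set y : RatFunc ℚ := RatFunc.X with hy
  set Cc : RatFunc ℚ →+* PowerSeries (RatFunc ℚ) := PowerSeries.C with hCc
  have hy0 : y ≠ 0 := RatFunc.X_ne_zero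
  have h1y : (1 : RatFunc ℚ) - y ≠ 0 := one_sub_X_ne
  have hS0' : PowerSeries.constantCoeff S ≠ 0 := by rw [hS0]; exact h1y
  have hSinv : S * S⁻¹ = 1 := PowerSeries.mul_inv_cancel S hS0'
  have hinv1 : invHom ((1 - y)^2) = (1 - y⁻¹)^2 := by
    rw [map_pow, map_sub, map_one, invHom_X]
  have hinv2 : invHom (-2 - 2*y) = -2 - 2*y⁻¹ := by
    have h2 : invHom (2 : RatFunc ℚ) = 2 := by rw [map_ofNat]
    rw [map_sub, map_neg, h2, map_mul, h2, invHom_X]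
  have e1 : (1 - y⁻¹)^2 = y⁻¹^2 * (1 - y)^2 := by field_simp; ring
  have e2 : ((-2 - 2*y⁻¹) * y⁻¹ : RatFunc ℚ) = y⁻¹^2 * (-2 - 2*y) := by field_simp; ring
  have key : ∀ A B A' B' : RatFunc ℚ, A = y⁻¹^2 * A' → B * y⁻¹ = y⁻¹^2 * B' →
      Cc A + Cc B * (Cc y⁻¹ * PowerSeries.X) + (Cc y⁻¹ * PowerSeries.X)^2 =
      Cc (y⁻¹^2) * (Cc A' + Cc B' * PowerSeries.X + PowerSeries.X^2) := by
    intro A B A' B' hA hB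
    have hA' : Cc A = Cc (y⁻¹^2) * Cc A' := by rw [hA, map_mul]
    have hB' : Cc B * Cc y⁻¹ = Cc (y⁻¹^2) * Cc B' := by rw [← map_mul, hB, map_mul]
    have hP : Cc y⁻¹ ^ 2 = Cc (y⁻¹^2) := (map_pow Cc y⁻¹ 2).symm
    linear_combination hA' + hB' * PowerSeries.X + hP * PowerSeries.X^2
  have hPhiDelta : Phi DeltaSeries = Cc (y⁻¹^2) * DeltaSeries := by
    rw [DeltaSeries, ← hy]
    rw [map_add, map_add, map_mul, map_pow Phi PowerSeries.X 2, Phi_X, Phi_C, Phi_C,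
      hinv1, hinv2]
    rw [show Cc ((RatFunc.X : RatFunc ℚ)⁻¹) = Cc y⁻¹ from rfl]
    exact key _ _ _ _ e1 e2
  -- Phi S = -(Cc y⁻¹) * S
  have hconstPhiS : PowerSeries.constantCoeff (Phi S) = 1 - y⁻¹ := by
    have h := coeff_Phi S 0
    simp only [PowerSeries.coeff_zero_eq_constantCoeff] at h
    rw [h, hS0, pow_zero, one_mul, ← invHom_apply, map_sub, map_one, invHom_X]
  have hyinv1 : y⁻¹ ≠ 1 := by
    intro h
    apply X_ne_one
    have := congrArg (· * y) h
    simpa [inv_mul_cancel₀ hy0] using this.symm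
  have hPhiS : Phi S = -(Cc y⁻¹) * S := by
    have hfac : (Phi S - (-(Cc y⁻¹) * S)) * (Phi S + (-(Cc y⁻¹) * S)) = 0 := by
      have hsq : (Phi S)^2 = (-(Cc y⁻¹) * S)^2 := by
        rw [← map_pow, hS2, hPhiDelta, neg_mul, neg_pow, mul_pow, ← map_pow, ← hS2]
        ring
      calc (Phi S - (-(Cc y⁻¹) * S)) * (Phi S + (-(Cc y⁻¹) * S))
          = (Phi S)^2 - (-(Cc y⁻¹) * S)^2 := by ring
        _ = 0 := by rw [hsq]; ring
    rcases mul_eq_zero.mp hfac with h | h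
    · linear_combination h
    · exfalso
      have hc := congrArg (PowerSeries.constantCoeff) h
      simp only [map_add, map_mul, map_neg, hS0, hconstPhiS, map_zero] at hc
      have hCcc : PowerSeries.constantCoeff (Cc y⁻¹) = y⁻¹ :=
        PowerSeries.constantCoeff_C _
      rw [hCcc] at hc
      have hmul : y * y⁻¹ = 1 := mul_inv_cancel₀ hy0
      have h2 : (2 : RatFunc ℚ) * (1 - y⁻¹) = 0 := by linear_combination hc - hmul
      rcases mul_eq_zero.mp h2 with h3 | h3
      · have : CharZero (RatFunc ℚ) :=
          charZero_of_injective_algebraMap (RingHom.injective (algebraMap ℚ (RatFunc ℚ)))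
        exact two_ne_zero h3
      · exact hyinv1 (by linear_combination -h3)
  have hPhiSne : Phi S ≠ 0 := by
    intro h
    rw [h, map_zero] at hconstPhiS
    exact hyinv1 (by linear_combination hconstPhiS)
  have hPhiSinv : Phi S⁻¹ = -(Cc y) * S⁻¹ := by
    apply mul_left_cancel₀ hPhiSne
    rw [← map_mul, hSinv, map_one]
    nth_rewrite 1 [hPhiS]
    rw [show -(Cc y⁻¹) * S * (-(Cc y) * S⁻¹) = (Cc y⁻¹ * Cc y) * (S * S⁻¹) by ring,
      ← map_mul (f := Cc), inv_mul_cancel₀ hy0, map_one, hSinv, one_mul]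
  have hPhiG : Phi G = -(Cc y⁻¹) * PowerSeries.X * S⁻¹ := by
    rw [hG, map_mul, map_mul, Phi_C, Phi_X, hPhiSinv, invHom_X]
    rw [show Cc y⁻¹ * (Cc y⁻¹ * PowerSeries.X) * (-(Cc y) * S⁻¹) =
        -(Cc y⁻¹ * (Cc y⁻¹ * Cc y)) * PowerSeries.X * S⁻¹ by ring,
      ← map_mul (f := Cc), inv_mul_cancel₀ hy0, map_one, mul_one]
  have hmk : PowerSeries.mk (fun m =>
        RatFunc.X ^ 2 * invSubst (PowerSeries.coeff m G) *
          (RatFunc.X⁻¹) ^ m) = Cc (y^2) * Phi G := by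
    ext n
    rw [PowerSeries.coeff_mk, PowerSeries.coeff_C_mul, coeff_Phi]
    ring
  rw [hmk, hPhiG, hG]
  rw [show Cc (y ^ 2) * (-(Cc y⁻¹) * PowerSeries.X * S⁻¹) =
      -(Cc (y^2) * Cc y⁻¹) * PowerSeries.X * S⁻¹ by ring, ← map_mul (f := Cc)]
  rw [show (y^2 * y⁻¹ : RatFunc ℚ) = y by field_simp]
  ring
end

section
/- The generating function E(ȳ,y̲,z) for staircase polygons of width three, given explicitly by E = z_0 z_1 z_2 z_3 (1 − ȳ_1 z_0 z_1 z_2 z_3 y̲_2) / [(1−z_0 y̲_1)(1−z_0 z_1 y̲_2)(1−ȳ_1 y̲_2)(1−z_0 z_1 z_2 z_3)(1−ȳ_1 z_2 z_3)(1−ȳ_2 z_3)], satisfies E(1/ȳ,1/y̲,1/z) = −(ȳ_1 ȳ_2 y̲_1 y̲_2)/(z_1 z_2) · E(ȳ,y̲,z). -/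
set_option maxHeartbeats 1000000


/-- The generating function for staircase polygons of width three,
`E = z₀z₁z₂z₃(1 − ȳ₁z₀z₁z₂z₃y̲₂) /
  [(1−z₀y̲₁)(1−z₀z₁y̲₂)(1−ȳ₁y̲₂)(1−z₀z₁z₂z₃)(1−ȳ₁z₂z₃)(1−ȳ₂z₃)]`,
satisfies `E(1/ȳ,1/y̲,1/z) = −(ȳ₁ȳ₂y̲₁y̲₂)/(z₁z₂) · E(ȳ,y̲,z)`. -/
theorem staircase_width_three_self_reciprocal
    (E : ℚ → ℚ → ℚ → ℚ → ℚ → ℚ → ℚ → ℚ → ℚ)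
    (hE : ∀ yb1 yb2 yu1 yu2 z0 z1 z2 z3 : ℚ,
      E yb1 yb2 yu1 yu2 z0 z1 z2 z3 =
        z0*z1*z2*z3 * (1 - yb1*z0*z1*z2*z3*yu2) /
          ((1 - z0*yu1) * (1 - z0*z1*yu2) * (1 - yb1*yu2) *
            (1 - z0*z1*z2*z3) * (1 - yb1*z2*z3) * (1 - yb2*z3))) :
    ∀ yb1 yb2 yu1 yu2 z0 z1 z2 z3 : ℚ,
      yb1 ≠ 0 → yb2 ≠ 0 → yu1 ≠ 0 → yu2 ≠ 0 →
      z0 ≠ 0 → z1 ≠ 0 → z2 ≠ 0 → z3 ≠ 0 →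
      z0*yu1 ≠ 1 → z0*z1*yu2 ≠ 1 → yb1*yu2 ≠ 1 →
      z0*z1*z2*z3 ≠ 1 → yb1*z2*z3 ≠ 1 → yb2*z3 ≠ 1 →
      E yb1⁻¹ yb2⁻¹ yu1⁻¹ yu2⁻¹ z0⁻¹ z1⁻¹ z2⁻¹ z3⁻¹ =
        - (yb1*yb2*yu1*yu2) / (z1*z2) * E yb1 yb2 yu1 yu2 z0 z1 z2 z3 := by
  intro yb1 yb2 yu1 yu2 z0 z1 z2 z3 h1 h2 h3 h4 h5 h6 h7 h8 n1 n2 n3 n4 n5 n6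
  have d1 : (1 : ℚ) - z0*yu1 ≠ 0 := sub_ne_zero.2 (Ne.symm n1)
  have d2 : (1 : ℚ) - z0*z1*yu2 ≠ 0 := sub_ne_zero.2 (Ne.symm n2)
  have d3 : (1 : ℚ) - yb1*yu2 ≠ 0 := sub_ne_zero.2 (Ne.symm n3)
  have d4 : (1 : ℚ) - z0*z1*z2*z3 ≠ 0 := sub_ne_zero.2 (Ne.symm n4)
  have d5 : (1 : ℚ) - yb1*z2*z3 ≠ 0 := sub_ne_zero.2 (Ne.symm n5)
  have d6 : (1 : ℚ) - yb2*z3 ≠ 0 := sub_ne_zero.2 (Ne.symm n6)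
  have e1 : (1:ℚ) - z0⁻¹*yu1⁻¹ = -(1 - z0*yu1)/(z0*yu1) := by
    field_simp
    ring
  have e2 : (1:ℚ) - z0⁻¹*z1⁻¹*yu2⁻¹ = -(1 - z0*z1*yu2)/(z0*z1*yu2) := by
    field_simp
    ring
  have e3 : (1:ℚ) - yb1⁻¹*yu2⁻¹ = -(1 - yb1*yu2)/(yb1*yu2) := by
    field_simp
    ring
  have e4 : (1:ℚ) - z0⁻¹*z1⁻¹*z2⁻¹*z3⁻¹ = -(1 - z0*z1*z2*z3)/(z0*z1*z2*z3) := by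
    field_simp
    ring
  have e5 : (1:ℚ) - yb1⁻¹*z2⁻¹*z3⁻¹ = -(1 - yb1*z2*z3)/(yb1*z2*z3) := by
    field_simp
    ring
  have e6 : (1:ℚ) - yb2⁻¹*z3⁻¹ = -(1 - yb2*z3)/(yb2*z3) := by
    field_simp
    ring
  have e7 : (1:ℚ) - yb1⁻¹*z0⁻¹*z1⁻¹*z2⁻¹*z3⁻¹*yu2⁻¹ =
      -(1 - yb1*z0*z1*z2*z3*yu2)/(yb1*z0*z1*z2*z3*yu2) := by
    field_simp
    ring
  rw [hE, hE, e1, e2, e3, e4, e5, e6, e7]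
  set A1 : ℚ := 1 - z0*yu1 with hA1
  set A2 : ℚ := 1 - z0*z1*yu2 with hA2
  set A3 : ℚ := 1 - yb1*yu2 with hA3
  set A4 : ℚ := 1 - z0*z1*z2*z3 with hA4
  set A5 : ℚ := 1 - yb1*z2*z3 with hA5
  set A6 : ℚ := 1 - yb2*z3 with hA6
  set A7 : ℚ := 1 - yb1*z0*z1*z2*z3*yu2 with hA7
  field_simp
end

section
/- The set of nonnegative integer solutions (N̄_1, N̄_2, N̲_1, N̲_2, M_0, M_1, M_2, M_3) with M_0, M_1, M_2, M_3 > 0 of the system {M_0 − M_1 − N̲_1 = 0, M_1 + N̄_1 − M_2 − N̲_2 = 0, M_2 + N̄_2 − M_3 = 0} has generating function Σ ȳ_1^{N̄_1} ȳ_2^{N̄_2} y̲_1^{N̲_1} y̲_2^{N̲_2} z_0^{M_0} z_1^{M_1} z_2^{M_2} z_3^{M_3} equal to z_0 z_1 z_2 z_3 (1 − ȳ_1 z_0 z_1 z_2 z_3 y̲_2) / [(1−z_0 y̲_1)(1−z_0 z_1 y̲_2)(1−ȳ_1 y̲_2)(1−z_0 z_1 z_2 z_3)(1−ȳ_1 z_2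 z_3)(1−ȳ_2 z_3)]. -/
open MvPowerSeries Finsupp
set_option maxHeartbeats 2000000

private lemma coeff_one_sub_mul (G : MvPowerSeries (Fin 8) ℚ) (m d : Fin 8 →₀ ℕ) :
    coeff d ((1 - monomial m 1) * G) =
      coeff d G - if m ≤ d then coeff (d - m) G else 0 := by
  rw [sub_mul, one_mul, map_sub, coeff_monomial_mul]
  split_ifs <;> simp

private lemma le42 (d : Fin 8 →₀ ℕ) :
    ((single 4 1 + single 2 1 : Fin 8 →₀ ℕ) ≤ d) ↔ 1 ≤ d 2 ∧ 1 ≤ d 4 := by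
  rw [Finsupp.le_def]
  constructor
  · intro h
    exact ⟨by simpa [Finsupp.single_apply] using h 2,
      by simpa [Finsupp.single_apply] using h 4⟩
  · rintro ⟨h1, h2⟩ i
    fin_cases i <;> simp [Finsupp.single_apply] <;> omega

private lemma le17 (d : Fin 8 →₀ ℕ) :
    ((single 1 1 + single 7 1 : Fin 8 →₀ ℕ) ≤ d) ↔ 1 ≤ d 1 ∧ 1 ≤ d 7 := by
  rw [Finsupp.le_def]
  constructor
  · intro h
    exact ⟨by simpa [Finsupp.single_apply] using h 1,
      by simpa [Finsupp.single_apply] using h 7⟩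
  · rintro ⟨h1, h2⟩ i
    fin_cases i <;> simp [Finsupp.single_apply] <;> omega

private lemma le03 (d : Fin 8 →₀ ℕ) :
    ((single 0 1 + single 3 1 : Fin 8 →₀ ℕ) ≤ d) ↔ 1 ≤ d 0 ∧ 1 ≤ d 3 := by
  rw [Finsupp.le_def]
  constructor
  · intro h
    exact ⟨by simpa [Finsupp.single_apply] using h 0,
      by simpa [Finsupp.single_apply] using h 3⟩
  · rintro ⟨h1, h2⟩ i
    fin_cases i <;> simp [Finsupp.single_apply] <;> omega

private lemma le453 (d : Fin 8 →₀ ℕ) :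
    ((single 4 1 + single 5 1 + single 3 1 : Fin 8 →₀ ℕ) ≤ d) ↔
      1 ≤ d 3 ∧ 1 ≤ d 4 ∧ 1 ≤ d 5 := by
  rw [Finsupp.le_def]
  constructor
  · intro h
    exact ⟨by simpa [Finsupp.single_apply] using h 3,
      by simpa [Finsupp.single_apply] using h 4,
      by simpa [Finsupp.single_apply] using h 5⟩
  · rintro ⟨h1, h2, h3⟩ i
    fin_cases i <;> simp [Finsupp.single_apply] <;> omega

private lemma le067 (d : Fin 8 →₀ ℕ) :
    ((single 0 1 + single 6 1 + single 7 1 : Fin 8 →₀ ℕ) ≤ d) ↔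
      1 ≤ d 0 ∧ 1 ≤ d 6 ∧ 1 ≤ d 7 := by
  rw [Finsupp.le_def]
  constructor
  · intro h
    exact ⟨by simpa [Finsupp.single_apply] using h 0,
      by simpa [Finsupp.single_apply] using h 6,
      by simpa [Finsupp.single_apply] using h 7⟩
  · rintro ⟨h1, h2, h3⟩ i
    fin_cases i <;> simp [Finsupp.single_apply] <;> omega

private lemma le4567 (d : Fin 8 →₀ ℕ) :
    ((single 4 1 + single 5 1 + single 6 1 + single 7 1 : Fin 8 →₀ ℕ) ≤ d) ↔
      1 ≤ d 4 ∧ 1 ≤ d 5 ∧ 1 ≤ d 6 ∧ 1 ≤ d 7 := by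
  rw [Finsupp.le_def]
  constructor
  · intro h
    exact ⟨by simpa [Finsupp.single_apply] using h 4,
      by simpa [Finsupp.single_apply] using h 5,
      by simpa [Finsupp.single_apply] using h 6,
      by simpa [Finsupp.single_apply] using h 7⟩
  · rintro ⟨h1, h2, h3, h4⟩ i
    fin_cases i <;> simp [Finsupp.single_apply] <;> omega

private lemma fin8_forall (P : Fin 8 → Prop) :
    (∀ i, P i) ↔ P 0 ∧ P 1 ∧ P 2 ∧ P 3 ∧ P 4 ∧ P 5 ∧ P 6 ∧ P 7 := by
  constructor
  · intro h; exact ⟨h 0, h 1, h 2, h 3, h 4, h 5, h 6, h 7⟩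
  · rintro ⟨a, b, c, d, e, f, g, k⟩ i
    fin_cases i <;> assumption

private def S1 : MvPowerSeries (Fin 8) ℚ := fun d =>
  if d 2 = 0 ∧ d 4 = d 5 ∧ d 5 + d 0 = d 6 + d 3 ∧ d 6 + d 1 = d 7 ∧
      1 ≤ d 5 ∧ 1 ≤ d 6 ∧ 1 ≤ d 7 then 1 else 0

private def S2 : MvPowerSeries (Fin 8) ℚ := fun d =>
  if d 1 = 0 ∧ d 2 = 0 ∧ d 4 = d 5 ∧ d 5 + d 0 = d 6 + d 3 ∧ d 6 = d 7 ∧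
      1 ≤ d 5 ∧ 1 ≤ d 6 then 1 else 0

private def S3 : MvPowerSeries (Fin 8) ℚ := fun d =>
  if d 1 = 0 ∧ d 2 = 0 ∧ d 4 = d 5 ∧ d 6 = d 7 ∧ d 0 + d 4 = d 3 + d 6 ∧
      1 ≤ d 4 ∧ 1 ≤ d 6 ∧ (d 0 = 0 ∨ d 3 = 0) then 1 else 0

private def S4 : MvPowerSeries (Fin 8) ℚ := fun d =>
  if d 1 = 0 ∧ d 2 = 0 ∧
      ((d 0 = 0 ∧ d 4 = d 3 + 1 ∧ d 5 = d 3 + 1 ∧ d 6 = 1 ∧ d 7 = 1) ∨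
       (d 3 = 0 ∧ d 4 = 1 ∧ d 5 = 1 ∧ 1 ≤ d 0 ∧ d 6 = d 0 + 1 ∧ d 7 = d 0 + 1))
    then 1 else 0

private def S5 : MvPowerSeries (Fin 8) ℚ := fun d =>
  (if d 1 = 0 ∧ d 2 = 0 ∧ d 3 = 0 ∧ d 4 = 1 ∧ d 5 = 1 ∧
      d 6 = d 0 + 1 ∧ d 7 = d 0 + 1 then 1 else 0) -
  (if d 1 = 0 ∧ d 2 = 0 ∧ d 3 = 1 ∧ d 4 = 2 ∧ d 5 = 2 ∧ 1 ≤ d 0 ∧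
      d 6 = d 0 + 1 ∧ d 7 = d 0 + 1 then 1 else 0)

/-- Variables: `0 ↦ ȳ₁, 1 ↦ ȳ₂, 2 ↦ y̲₁, 3 ↦ y̲₂, 4 ↦ z₀, 5 ↦ z₁, 6 ↦ z₂, 7 ↦ z₃`.
The generating function of nonnegative integer solutions
`(N̄₁,N̄₂,N̲₁,N̲₂,M₀,M₁,M₂,M₃)` with `M₀,M₁,M₂,M₃ > 0` of
`{M₀−M₁−N̲₁ = 0, M₁+N̄₁−M₂−N̲₂ = 0, M₂+N̄₂−M₃ = 0}` equals
`z₀z₁z₂z₃(1−ȳ₁z₀z₁z₂z₃y̲₂) /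
 [(1−z₀y̲₁)(1−z₀z₁y̲₂)(1−ȳ₁y̲₂)(1−z₀z₁z₂z₃)(1−ȳ₁z₂z₃)(1−ȳ₂z₃)]`,
as a formal power series identity. -/
theorem staircase_width_three_generating_function
    (E : MvPowerSeries (Fin 8) ℚ)
    (hE : ∀ d : Fin 8 →₀ ℕ, E d =
      if ((d 4 : ℤ) - d 5 - d 2 = 0 ∧
          (d 5 : ℤ) + d 0 - d 6 - d 3 = 0 ∧
          (d 6 : ℤ) + d 1 - d 7 = 0 ∧
          0 < d 4 ∧ 0 < d 5 ∧ 0 < d 6 ∧ 0 < d 7) then 1 else 0) :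
    (1 - X 4 * X 2) * (1 - X 4 * X 5 * X 3) * (1 - X 0 * X 3) *
        (1 - X 4 * X 5 * X 6 * X 7) * (1 - X 0 * X 6 * X 7) *
        (1 - X 1 * X 7) * E =
      X 4 * X 5 * X 6 * X 7 * (1 - X 0 * X 4 * X 5 * X 6 * X 7 * X 3) := by
  have e1 : (X 4 * X 2 : MvPowerSeries (Fin 8) ℚ) =
      monomial (single 4 1 + single 2 1) 1 := by
    rw [X_def, X_def, monomial_mul_monomial, mul_one]
  have e2 : (X 1 * X 7 : MvPowerSeries (Fin 8) ℚ) =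
      monomial (single 1 1 + single 7 1) 1 := by
    rw [X_def, X_def, monomial_mul_monomial, mul_one]
  have e3 : (X 0 * X 3 : MvPowerSeries (Fin 8) ℚ) =
      monomial (single 0 1 + single 3 1) 1 := by
    rw [X_def, X_def, monomial_mul_monomial, mul_one]
  have e4 : (X 4 * X 5 * X 6 * X 7 : MvPowerSeries (Fin 8) ℚ) =
      monomial (single 4 1 + single 5 1 + single 6 1 + single 7 1) 1 := by
    rw [X_def, X_def, X_def, X_def, monomial_mul_monomial, monomial_mul_monomial,
      monomial_mul_monomial]; norm_num
  have e5 : (X 4 * X 5 * X 3 : MvPowerSeries (Fin 8) ℚ) =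
      monomial (single 4 1 + single 5 1 + single 3 1) 1 := by
    rw [X_def, X_def, X_def, monomial_mul_monomial, monomial_mul_monomial]; norm_num
  have e6 : (X 0 * X 6 * X 7 : MvPowerSeries (Fin 8) ℚ) =
      monomial (single 0 1 + single 6 1 + single 7 1) 1 := by
    rw [X_def, X_def, X_def, monomial_mul_monomial, monomial_mul_monomial]; norm_num
  have h1 : (1 - monomial (single 4 1 + single 2 1) 1) * E = S1 := by
    ext d
    rw [coeff_one_sub_mul]
    simp only [coeff_apply, hE, S1, le42 d]
    simp [Finsupp.tsub_apply, Finsupp.single_apply]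
    split_ifs <;> (try norm_num) <;> omega
  have h2 : (1 - monomial (single 1 1 + single 7 1) 1) * S1 = S2 := by
    ext d
    rw [coeff_one_sub_mul]
    simp only [coeff_apply, S1, S2, le17 d]
    simp [Finsupp.tsub_apply, Finsupp.single_apply]
    split_ifs <;> (try norm_num) <;> omega
  have h3 : (1 - monomial (single 0 1 + single 3 1) 1) * S2 = S3 := by
    ext d
    rw [coeff_one_sub_mul]
    simp only [coeff_apply, S2, S3, le03 d]
    simp [Finsupp.tsub_apply, Finsupp.single_apply]
    split_ifs <;> (try norm_num) <;> omega
  have h4 : (1 - monomial (single 4 1 + single 5 1 + single 6 1 + single 7 1) 1) *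
      S3 = S4 := by
    ext d
    rw [coeff_one_sub_mul]
    simp only [coeff_apply, S3, S4,
      le4567 d]
    simp [Finsupp.tsub_apply, Finsupp.single_apply]
    split_ifs <;> (try norm_num) <;> omega
  have h5 : (1 - monomial (single 4 1 + single 5 1 + single 3 1) 1) * S4 = S5 := by
    ext d
    rw [coeff_one_sub_mul]
    simp only [coeff_apply, S4, S5,
      le453 d]
    simp [Finsupp.tsub_apply, Finsupp.single_apply]
    split_ifs <;> (try norm_num) <;> omega
  have h6 : (1 - monomial (single 0 1 + single 6 1 + single 7 1) 1) * S5 =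
      monomial (single 4 1 + single 5 1 + single 6 1 + single 7 1) 1 -
      monomial (single 0 1 + single 3 1 + single 4 2 + single 5 2 +
        single 6 2 + single 7 2) 1 := by
    ext d
    rw [coeff_one_sub_mul, map_sub, coeff_monomial, coeff_monomial]
    simp only [coeff_apply, S5, le067 d,
      DFunLike.ext_iff, fin8_forall]
    simp [Finsupp.tsub_apply, Finsupp.single_apply]
    split_ifs <;> (try norm_num) <;> omega
  have e7 : (X 0 * X 4 * X 5 * X 6 * X 7 * X 3 : MvPowerSeries (Fin 8) ℚ) =
      monomial (single 0 1 + single 4 1 + single 5 1 + single 6 1 + single 7 1 +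
        single 3 1) 1 := by
    rw [X_def, X_def, X_def, X_def, X_def, X_def, monomial_mul_monomial,
      monomial_mul_monomial, monomial_mul_monomial, monomial_mul_monomial,
      monomial_mul_monomial]
    norm_num
  have hexp : (single 4 1 + single 5 1 + single 6 1 + single 7 1) +
      (single 0 1 + single 4 1 + single 5 1 + single 6 1 + single 7 1 + single 3 1) =
      (single 0 1 + single 3 1 + single 4 2 + single 5 2 +
        single 6 2 + single 7 2 : Fin 8 →₀ ℕ) := by
    ext i
    fin_cases i <;> simp [Finsupp.single_apply]
  have hRHS : (X 4 * X 5 * X 6 * X 7 * (1 - X 0 * X 4 * X 5 * X 6 * X 7 * X 3) :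
      MvPowerSeries (Fin 8) ℚ) =
      monomial (single 4 1 + single 5 1 + single 6 1 + single 7 1) 1 -
      monomial (single 0 1 + single 3 1 + single 4 2 + single 5 2 +
        single 6 2 + single 7 2) 1 := by
    rw [mul_sub, mul_one, e4, e7, monomial_mul_monomial, mul_one, hexp]
  calc (1 - X 4 * X 2) * (1 - X 4 * X 5 * X 3) * (1 - X 0 * X 3) *
        (1 - X 4 * X 5 * X 6 * X 7) * (1 - X 0 * X 6 * X 7) *
        (1 - X 1 * X 7) * E
      = (1 - (X 0 * X 6 * X 7 : MvPowerSeries (Fin 8) ℚ)) *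
        ((1 - X 4 * X 5 * X 3) * ((1 - X 4 * X 5 * X 6 * X 7) *
        ((1 - X 0 * X 3) * ((1 - X 1 * X 7) * ((1 - X 4 * X 2) * E))))) := by ring
    _ = X 4 * X 5 * X 6 * X 7 * (1 - X 0 * X 4 * X 5 * X 6 * X 7 * X 3) := by
        rw [hRHS, e1, h1, e2, h2, e3, h3, e4, h4, e5, h5, e6, h6]
end

section
/- Define V_1(y̲_1) = ȳ_0 y̲_1/(1 − ȳ_0 y̲_1) and, inductively, V_{m+1}(y̲_{m+1}) = (1−y̲_m z̲_m)(1−ȳ_m z̄_m) V_m(y̲_{m+1}) / [(1−y̲_{m+1} ȳ_m)(1−y̲_{m+1} z̲_m)(1−y̲_{m+1}^{-1} y̲_m)(1−y̲_{m+1}^{-1} z̄_m)] + (z̄_m − y̲_{m+1} y̲_m z̲_m) V_m(z̄_m) / [(1−y̲_{m+1} z̲_m)(1−y̲_{m+1}^{-1} z̄_m)(y̲_m − z̄_m)] + (y̲_m − y̲_{m+1} ȳ_m z̄_m) V_m(y̲_m) / [(1−y̲_{m+1} ȳ_m)(1−y̲_{m+1}^{-1} y̲_m)(z̄_m − y̲_m)].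 Then for all m ≥ 1, V_m(1/ȳ, 1/z̄, 1/y̲, 1/z̲) = −(1/(ȳ_0 y̲_m)) V_m(ȳ, z̄, y̲, z̲). -/
/-- The Temperley recursion defining the generating function `V_m(t)` for
column-convex polygons of width `m`, where `t` stands for the value
substituted for the last bottom-path variable `y̲_m`, and `yb i`, `zb i`,
`yu i`, `zu i` are the values of the variables `ȳᵢ, z̄ᵢ, y̲ᵢ, z̲ᵢ`. -/
noncomputable def Vcc {K : Type*} [Field K]
    (yb zb yu zu : ℕ → K) : ℕ → K → K
  | 0, _ => 0
  | 1, t => yb 0 * t / (1 - yb 0 * t)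
  | (m+2), t =>
      ((1 - yu (m+1) * zu (m+1)) * (1 - yb (m+1) * zb (m+1)) *
          Vcc yb zb yu zu (m+1) t) /
        ((1 - t * yb (m+1)) * (1 - t * zu (m+1)) *
          (1 - t⁻¹ * yu (m+1)) * (1 - t⁻¹ * zb (m+1)))
      + ((zb (m+1) - t * yu (m+1) * zu (m+1)) *
          Vcc yb zb yu zu (m+1) (zb (m+1))) /
        ((1 - t * zu (m+1)) * (1 - t⁻¹ * zb (m+1)) * (yu (m+1) - zb (m+1)))
      + ((yu (m+1) - t * yb (m+1) * zb (m+1)) *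
          Vcc yb zb yu zu (m+1) (yu (m+1))) /
        ((1 - t * yb (m+1)) * (1 - t⁻¹ * yu (m+1)) * (zb (m+1) - yu (m+1)))


section FieldLemmas
variable {K : Type*} [Field K]

lemma Vcc_term1 (y0 t Y Z U W a b c d p q A : K)
    (hy0 : y0 ≠ 0) (ht : t ≠ 0) (hY : Y ≠ 0) (hZ : Z ≠ 0) (hU : U ≠ 0) (hW : W ≠ 0)
    (ha : a ≠ 0) (hb : b ≠ 0) (hc : c ≠ 0) (hd : d ≠ 0) :
    ((-p / (U * W)) * (-q / (Y * Z)) * (-(y0 * t)⁻¹ * A)) /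
        ((-a / (t * Y)) * (-b / (t * W)) * (-d / U) * (-c / Z))
    = -(y0 * t)⁻¹ * ((p * q * A) / (a * b * (d / t) * (c / t))) := by
  simp only [inv_eq_one_div, neg_div', div_mul_div_comm, div_mul_eq_mul_div, mul_div_assoc',
    div_div, div_div_eq_mul_div, one_mul, mul_one, neg_mul, mul_neg, neg_neg]
  rw [div_eq_div_iff
    (by simp [mul_eq_zero, hy0, ht, hY, hZ, hU, hW, ha, hb, hc, hd])
    (by simp [mul_eq_zero, hy0, ht, ha, hb, hc, hd])]
  ring

lemma Vcc_term2 (y0 t Z U W b c e B : K)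
    (hy0 : y0 ≠ 0) (ht : t ≠ 0) (hZ : Z ≠ 0) (hU : U ≠ 0) (hW : W ≠ 0)
    (hb : b ≠ 0) (hc : c ≠ 0) (he : e ≠ 0) :
    (((t * U * W - Z) / (t * U * W * Z)) * (-(y0 * Z)⁻¹ * B)) /
        ((-b / (t * W)) * (-c / Z) * (-e / (U * Z)))
    = -(y0 * t)⁻¹ * (((Z - t * U * W) * B) / (b * (c / t) * e)) := by
  simp only [inv_eq_one_div, neg_div', div_mul_div_comm, div_mul_eq_mul_div, mul_div_assoc',
    div_div, div_div_eq_mul_div, one_mul, mul_one, neg_mul, mul_neg, neg_neg]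
  rw [div_eq_div_iff
    (by simp [mul_eq_zero, hy0, ht, hZ, hU, hW, hb, hc, he])
    (by simp [mul_eq_zero, hy0, ht, hb, hc, he])]
  ring

lemma Vcc_term3 (y0 t Y Z U a d e C : K)
    (hy0 : y0 ≠ 0) (ht : t ≠ 0) (hY : Y ≠ 0) (hZ : Z ≠ 0) (hU : U ≠ 0)
    (ha : a ≠ 0) (hd : d ≠ 0) (he : e ≠ 0) :
    (((t * Y * Z - U) / (t * Y * Z * U)) * (-(y0 * U)⁻¹ * C)) /
        ((-a / (t * Y)) * (-d / U) * (e / (U * Z)))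
    = -(y0 * t)⁻¹ * (((U - t * Y * Z) * C) / (a * (d / t) * -e)) := by
  simp only [inv_eq_one_div, neg_div', div_mul_div_comm, div_mul_eq_mul_div, mul_div_assoc',
    div_div, div_div_eq_mul_div, one_mul, mul_one, neg_mul, mul_neg, neg_neg]
  rw [div_eq_div_iff
    (by simp [mul_eq_zero, hy0, ht, hY, hZ, hU, ha, hd, he])
    (by simp [mul_eq_zero, hy0, ht, ha, hd, he])]
  ring

lemma Vcc_base (y0 s : K) (hy0 : y0 ≠ 0) (hs : s ≠ 0) (h1 : 1 - y0 * s ≠ 0) :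
    y0⁻¹ * s⁻¹ / (1 - y0⁻¹ * s⁻¹) = -(y0 * s)⁻¹ * (y0 * s / (1 - y0 * s)) := by
  have e : (1 : K) - y0⁻¹ * s⁻¹ = -(1 - y0 * s) / (y0 * s) := by field_simp; ring
  rw [e]
  simp only [inv_eq_one_div, neg_div', div_mul_div_comm, div_mul_eq_mul_div, mul_div_assoc',
    div_div, div_div_eq_mul_div, one_mul, mul_one, neg_mul, mul_neg, neg_neg]
  rw [div_eq_div_iff
    (by simp [mul_eq_zero, hy0, hs, h1])
    (by simp [mul_eq_zero, hy0, hs, h1])]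
  ring

lemma Vcc_step (y0 t Y Z U W A B C : K)
    (hy0 : y0 ≠ 0) (ht : t ≠ 0) (hY : Y ≠ 0) (hZ : Z ≠ 0) (hU : U ≠ 0) (hW : W ≠ 0)
    (htY : 1 - t * Y ≠ 0) (htW : 1 - t * W ≠ 0)
    (htZ : t - Z ≠ 0) (htU : t - U ≠ 0) (hUZ : U - Z ≠ 0) :
    ((1 - U⁻¹ * W⁻¹) * (1 - Y⁻¹ * Z⁻¹) * (-(y0 * t)⁻¹ * A)) /
        ((1 - t⁻¹ * Y⁻¹) * (1 - t⁻¹ * W⁻¹) * (1 - t * U⁻¹) * (1 - t * Z⁻¹))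
      + ((Z⁻¹ - t⁻¹ * U⁻¹ * W⁻¹) * (-(y0 * Z)⁻¹ * B)) /
        ((1 - t⁻¹ * W⁻¹) * (1 - t * Z⁻¹) * (U⁻¹ - Z⁻¹))
      + ((U⁻¹ - t⁻¹ * Y⁻¹ * Z⁻¹) * (-(y0 * U)⁻¹ * C)) /
        ((1 - t⁻¹ * Y⁻¹) * (1 - t * U⁻¹) * (Z⁻¹ - U⁻¹))
    = -(y0 * t)⁻¹ *
      (((1 - U * W) * (1 - Y * Z) * A) /
          ((1 - t * Y) * (1 - t * W) * (1 - t⁻¹ * U) * (1 - t⁻¹ * Z))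
        + ((Z - t * U * W) * B) / ((1 - t * W) * (1 - t⁻¹ * Z) * (U - Z))
        + ((U - t * Y * Z) * C) / ((1 - t * Y) * (1 - t⁻¹ * U) * (Z - U))) := by
  have e1 : (1 : K) - t⁻¹ * Y⁻¹ = -(1 - t * Y) / (t * Y) := by field_simp; ring
  have e2 : (1 : K) - t⁻¹ * W⁻¹ = -(1 - t * W) / (t * W) := by field_simp; ring
  have e3 : (1 : K) - t * U⁻¹ = -(t - U) / U := by
    rw [eq_div_iff hU]; field_simp; ring
  have e4 : (1 : K) - t * Z⁻¹ = -(t - Z) / Z := by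
    rw [eq_div_iff hZ]; field_simp; ring
  have e5 : U⁻¹ - Z⁻¹ = -(U - Z) / (U * Z) := by
    rw [eq_div_iff (mul_ne_zero hU hZ)]; field_simp; ring
  have e6 : Z⁻¹ - U⁻¹ = (U - Z) / (U * Z) := by
    rw [eq_div_iff (mul_ne_zero hU hZ)]; field_simp
  have e7 : (1 : K) - t⁻¹ * U = (t - U) / t := by field_simp
  have e8 : (1 : K) - t⁻¹ * Z = (t - Z) / t := by field_simp
  have e9 : Z⁻¹ - t⁻¹ * U⁻¹ * W⁻¹ = (t * U * W - Z) / (t * U * W * Z) := by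
    rw [eq_div_iff (by simp [mul_eq_zero, ht, hU, hW, hZ])]; field_simp
  have e10 : U⁻¹ - t⁻¹ * Y⁻¹ * Z⁻¹ = (t * Y * Z - U) / (t * Y * Z * U) := by
    rw [eq_div_iff (by simp [mul_eq_zero, ht, hU, hY, hZ])]; field_simp
  have e11 : (1 : K) - U⁻¹ * W⁻¹ = -(1 - U * W) / (U * W) := by field_simp; ring
  have e12 : (1 : K) - Y⁻¹ * Z⁻¹ = -(1 - Y * Z) / (Y * Z) := by field_simp; ring
  have e13 : Z - U = -(U - Z) := by ring
  rw [e1, e2, e3, e4, e5, e6, e7, e8, e9, e10, e11, e12, e13,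
    Vcc_term1 y0 t Y Z U W (1 - t * Y) (1 - t * W) (t - Z) (t - U) (1 - U * W) (1 - Y * Z) A
      hy0 ht hY hZ hU hW htY htW htZ htU,
    Vcc_term2 y0 t Z U W (1 - t * W) (t - Z) (U - Z) B hy0 ht hZ hU hW htW htZ hUZ,
    Vcc_term3 y0 t Y Z U (1 - t * Y) (t - U) (U - Z) C hy0 ht hY hZ hU htY htU hUZ]
  ring

end FieldLemmas


section PolyLemmas

abbrev Fcc := FractionRing (MvPolynomial (Fin 4 × ℕ) ℚ)

lemma phi_ne_zero {P : MvPolynomial (Fin 4 × ℕ) ℚ} (hP : P ≠ 0) :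
    algebraMap (MvPolynomial (Fin 4 × ℕ) ℚ) Fcc P ≠ 0 := by
  exact (map_ne_zero_iff _ (IsFractionRing.injective _ _)).mpr hP

lemma X_ne (p : Fin 4 × ℕ) :
    algebraMap (MvPolynomial (Fin 4 × ℕ) ℚ) Fcc (MvPolynomial.X p) ≠ 0 :=
  phi_ne_zero (MvPolynomial.X_ne_zero p)

lemma one_sub_XX_ne (p q : Fin 4 × ℕ) :
    (1 : Fcc) - algebraMap (MvPolynomial (Fin 4 × ℕ) ℚ) Fcc (MvPolynomial.X p) *
      algebraMap (MvPolynomial (Fin 4 × ℕ) ℚ) Fcc (MvPolynomial.X q) ≠ 0 := by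
  have h : (1 - MvPolynomial.X p * MvPolynomial.X q : MvPolynomial (Fin 4 × ℕ) ℚ) ≠ 0 := by
    intro h
    have := congrArg (MvPolynomial.eval (fun _ => 0)) h
    simp at this
  have := phi_ne_zero h
  rwa [map_sub, map_one, map_mul] at this

lemma XX_sub_ne (p q : Fin 4 × ℕ) (hpq : p ≠ q) :
    algebraMap (MvPolynomial (Fin 4 × ℕ) ℚ) Fcc (MvPolynomial.X p) -
      algebraMap (MvPolynomial (Fin 4 × ℕ) ℚ) Fcc (MvPolynomial.X q) ≠ 0 := by
  have h : (MvPolynomial.X p - MvPolynomial.X q : MvPolynomial (Fin 4 × ℕ) ℚ) ≠ 0 := by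
    intro h
    have := congrArg (MvPolynomial.eval (fun r => if r = p then (1 : ℚ) else 0)) h
    simp [hpq, Ne.symm hpq] at this
  have := phi_ne_zero h
  rwa [map_sub] at this

end PolyLemmas


lemma Vcc_main (v : Fin 4 → ℕ → FractionRing (MvPolynomial (Fin 4 × ℕ) ℚ))
    (hv : ∀ j i, v j i =
      algebraMap (MvPolynomial (Fin 4 × ℕ) ℚ) _ (MvPolynomial.X (j, i))) :
    ∀ m : ℕ, 1 ≤ m → ∀ (j : Fin 4) (i : ℕ), m ≤ i →
      Vcc (fun i => (v 0 i)⁻¹) (fun i => (v 1 i)⁻¹)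
          (fun i => (v 2 i)⁻¹) (fun i => (v 3 i)⁻¹) m ((v j i)⁻¹) =
        - (v 0 0 * v j i)⁻¹ * Vcc (v 0) (v 1) (v 2) (v 3) m (v j i) := by
  have hne : ∀ j i, v j i ≠ 0 := fun j i => by rw [hv]; exact X_ne _
  have hone : ∀ j i j' i', (1 : FractionRing (MvPolynomial (Fin 4 × ℕ) ℚ)) -
      v j i * v j' i' ≠ 0 := fun j i j' i' => by
    rw [hv, hv]; exact one_sub_XX_ne _ _
  have hdiff : ∀ j i j' i', (j, i) ≠ (j', i') → v j i - v j' i' ≠ 0 :=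
    fun j i j' i' h => by rw [hv, hv]; exact XX_sub_ne _ _ h
  intro m
  induction m with
  | zero => exact fun h => absurd h (by omega)
  | succ n ih =>
    intro _ j i hi
    rcases n with _ | k
    · simp only [Vcc]
      exact Vcc_base _ _ (hne 0 0) (hne j i) (hone 0 0 j i)
    · have IH := ih (by omega)
      simp only [Vcc, inv_inv]
      rw [IH j i (by omega), IH 1 (k+1) le_rfl, IH 2 (k+1) le_rfl]
      exact Vcc_step (v 0 0) (v j i) (v 0 (k+1)) (v 1 (k+1)) (v 2 (k+1)) (v 3 (k+1)) _ _ _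
        (hne 0 0) (hne j i) (hne 0 (k+1)) (hne 1 (k+1)) (hne 2 (k+1)) (hne 3 (k+1))
        (hone j i 0 (k+1)) (hone j i 3 (k+1))
        (hdiff j i 1 (k+1) (by intro h; rw [Prod.mk.injEq] at h; omega))
        (hdiff j i 2 (k+1) (by intro h; rw [Prod.mk.injEq] at h; omega))
        (hdiff 2 (k+1) 1 (k+1) (by intro h; rw [Prod.mk.injEq] at h; exact absurd h.1 (by decide)))

/-- In the field of rational functions in the variables `ȳᵢ, z̄ᵢ, y̲ᵢ, z̲ᵢ`,
the generating functions `V_m` defined by the Temperley recursion satisfy the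
self-reciprocity `V_m(1/ȳ,1/z̄,1/y̲,1/z̲) = −(1/(ȳ₀ y̲_m)) V_m(ȳ,z̄,y̲,z̲)`
for all `m ≥ 1`. -/
theorem column_convex_self_reciprocal
    (v : Fin 4 → ℕ → FractionRing (MvPolynomial (Fin 4 × ℕ) ℚ))
    (hv : ∀ j i, v j i =
      algebraMap (MvPolynomial (Fin 4 × ℕ) ℚ) _ (MvPolynomial.X (j, i))) :
    ∀ m : ℕ, 1 ≤ m →
      Vcc (fun i => (v 0 i)⁻¹) (fun i => (v 1 i)⁻¹)
          (fun i => (v 2 i)⁻¹) (fun i => (v 3 i)⁻¹) m ((v 2 m)⁻¹) =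
        - (v 0 0 * v 2 m)⁻¹ * Vcc (v 0) (v 1) (v 2) (v 3) m (v 2 m) := by
  exact fun m hm => Vcc_main v hv m hm 2 m le_rfl
end

section
/- Suppose a power series G(x,y) = Σ_{m≥1} H_m(y) x^m has coefficients H_m(y) = P_m(y)/D_m(y) with D_m a polynomial of degree d_m, D_m(0)=1, D_m(1/y) = ± y^{−d_m} D_m(y), P_m a polynomial with P_m(0)=0, and G satisfies both the symmetry G(x,y) = G(y,x) and an inversion relation H_m(1/y) ± ε^m y^{m−α} H_m(y) = 0 with ε ∈ {−1,1}. If d_m < 3m − α for all m, then G is uniquely determined by these conditions together with the denominators D_m; concretely, for each m, knowing the coefficients of y^1,...,y^{m−1} in P_m and the relation a_k ± a_ℓ fixed for k+ℓ = α + d_m − m determines all coefficients a_k of P_m. -/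
/-- Suppose `H_m(y) = P_m(y)/D_m(y)` with `deg D_m = d`, `P_m(y) = Σ_k a_k y^k`
with `a_k = 0` unless `1 ≤ k ≤ d`.  The `x`-`y` symmetry of `G` determines the
coefficients `a_k` for `k < m` (they agree for any two candidate numerators),
and the inversion relation fixes the combinations `a_k ± a_ℓ` for
`k + ℓ = α + d − m`.  If `d < 3m − α`, these data determine all coefficients
`a_k` uniquely. -/
theorem inversion_determines_numerator
    (m d : ℕ) (α : ℤ) (hm : 1 ≤ m) (hd : (d : ℤ) < 3 * m - α)
    (σ : ℚ) (hσ : σ = 1 ∨ σ = -1)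
    (a a' : ℤ → ℚ)
    (ha : ∀ k : ℤ, (k < 1 ∨ (d : ℤ) < k) → a k = 0)
    (ha' : ∀ k : ℤ, (k < 1 ∨ (d : ℤ) < k) → a' k = 0)
    (hlow : ∀ k : ℤ, k < (m : ℤ) → a k = a' k)
    (hinv : ∀ k l : ℤ, k + l = α + d - m →
      a k + σ * a l = a' k + σ * a' l) :
    ∀ k : ℤ, a k = a' k := by
  intro k
  by_cases hk : k < (m : ℤ)
  · exact hlow k hk
  · have hl : α + ↑d - ↑m - k < (m : ℤ) := by omega
    have h1 := hinv k (α + ↑d - ↑m - k) (by ring)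
    have h2 := hlow _ hl
    rw [h2] at h1
    linarith
end
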